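/- arXiv:2012.08390 — 4 statements merged into one kernel-verified Lean document; each statement's English description precedes it below -/
import Mathlib

section
/- Let Γ be a graph whose vertex set is partitioned as C ∪ D, where the induced subgraph on C is regular, and every vertex x ∈ D has exactly 0, |C|/2, or |C| neighbours in C. Let Γ' be the graph obtained by switching adjacency and non-adjacency between x and C for every x ∈ D with exactly |C|/2 neighbours in C. Then Γ and Γ' are cospectral (their adjacency matrices have the same characteristic polynomial). -/
open SimpleGraph Matrix Finset Polynomial

private theorem gm_charpoly_conj {n R : Type*} [CommRing R] [Fintype n] [DecidableEq n]
    (Q A : Matrix n n R) (h : Q * Q = 1) : (Q * A * Q).charpoly = A.charpoly := by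
  have hQc : Q.map C * Q.map C = 1 := by
    rw [← Matrix.map_mul, h]; simp
  have h1 : charmatrix (Q * A * Q) = Q.map C * charmatrix A * Q.map C := by
    rw [charmatrix, charmatrix, Matrix.mul_sub, Matrix.sub_mul]
    congr 1
    · rw [← (scalar_commute X (Commute.all X) (Q.map C)).eq, Matrix.mul_assoc, hQc, mul_one]
    · simp [Matrix.map_mul]
  rw [Matrix.charpoly, Matrix.charpoly, h1, det_mul, det_mul]
  have h2 : (Q.map C).det * (Q.map C).det = 1 := by rw [← det_mul, hQc, det_one]
  linear_combination (charmatrix A).det * h2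

private theorem gm_sum_col {V : Type*} [Fintype V] [DecidableEq V] (Γ : SimpleGraph V)
    [DecidableRel Γ.Adj] (C : Finset V) (j : V) :
    ∑ l ∈ C, (Γ.adjMatrix ℝ) l j = ((Γ.neighborFinset j ∩ C).card : ℝ) := by
  simp only [adjMatrix_apply]
  rw [Finset.sum_boole]
  congr 2
  ext l
  simp only [Finset.mem_filter, Finset.mem_inter, mem_neighborFinset]
  rw [SimpleGraph.adj_comm, and_comm]

private theorem gm_sum_row {V : Type*} [Fintype V] [DecidableEq V] (Γ : SimpleGraph V)
    [DecidableRel Γ.Adj] (C : Finset V) (x : V) :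
    ∑ l ∈ C, (Γ.adjMatrix ℝ) x l = ((Γ.neighborFinset x ∩ C).card : ℝ) := by
  simp only [adjMatrix_apply]
  rw [Finset.sum_boole]
  congr 2
  ext l
  simp only [Finset.mem_filter, Finset.mem_inter, mem_neighborFinset]
  rw [and_comm]

set_option maxHeartbeats 2000000 in
/-- Godsil–McKay switching produces a cospectral graph. -/
theorem gm_switching_cospectral {V : Type*} [Fintype V] [DecidableEq V]
    (Γ Γ' : SimpleGraph V) [DecidableRel Γ.Adj] [DecidableRel Γ'.Adj]
    (C : Finset V) (k : ℕ)
    -- the induced subgraph on `C` is regular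
    (hreg : ∀ v ∈ C, (Γ.neighborFinset v ∩ C).card = k)
    -- every vertex outside `C` has `0`, `|C|/2` or `|C|` neighbours in `C`
    (hD : ∀ x ∉ C, (Γ.neighborFinset x ∩ C).card = 0 ∨
      2 * (Γ.neighborFinset x ∩ C).card = C.card ∨
      (Γ.neighborFinset x ∩ C).card = C.card)
    -- `Γ'` is obtained from `Γ` by switching adjacency between `C` and the
    -- vertices outside `C` having exactly `|C|/2` neighbours in `C`
    (hswitch : ∀ u v, Γ'.Adj u v ↔
      (if (u ∈ C ∧ v ∉ C ∧ 2 * (Γ.neighborFinset v ∩ C).card = C.card) ∨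
          (v ∈ C ∧ u ∉ C ∧ 2 * (Γ.neighborFinset u ∩ C).card = C.card)
        then ¬ Γ.Adj u v else Γ.Adj u v)) :
    (Γ.adjMatrix ℝ).charpoly = (Γ'.adjMatrix ℝ).charpoly := by
  classical
  set A : Matrix V V ℝ := Γ.adjMatrix ℝ with hA
  set A' : Matrix V V ℝ := Γ'.adjMatrix ℝ with hA'
  set Q : Matrix V V ℝ := Matrix.of (fun i j =>
      (if i ∈ C ∧ j ∈ C then 2/(C.card : ℝ) else 0)
        - (if i = j ∧ i ∈ C then 1 else 0) + (if i = j ∧ i ∉ C then 1 else 0)) with hQ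
  -- cardinal positivity when C is inhabited
  have hcpos : ∀ i ∈ C, (0:ℝ) < C.card := by
    intro i hi
    exact_mod_cast Finset.card_pos.mpr ⟨i, hi⟩
  -- row/column descriptions of Q
  have hrow_out : ∀ i ∉ C, ∀ l, Q i l = if i = l then 1 else 0 := by
    intro i hi l
    simp only [hQ, Matrix.of_apply]
    by_cases h : i = l
    · subst h; simp [hi]
    · simp [h, hi]
  have hrow_in : ∀ i ∈ C, ∀ l,
      Q i l = (if l ∈ C then 2/(C.card : ℝ) else 0) - (if i = l then 1 else 0) := by
    intro i hi l
    simp only [hQ, Matrix.of_apply]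
    by_cases h : i = l
    · subst h; simp [hi]
    · simp [h, hi]
  have hcol_out : ∀ j ∉ C, ∀ l, Q l j = if l = j then 1 else 0 := by
    intro j hj l
    simp only [hQ, Matrix.of_apply]
    by_cases h : l = j
    · subst h; simp [hj]
    · simp [h, hj]
  have hcol_in : ∀ j ∈ C, ∀ l,
      Q l j = (if l ∈ C then 2/(C.card : ℝ) else 0) - (if l = j then 1 else 0) := by
    intro j hj l
    simp only [hQ, Matrix.of_apply]
    by_cases h : l = j
    · subst h; simp [hj]
    · by_cases hl : l ∈ C <;> simp [h, hl, hj]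
  -- Q is an involution
  have hQQ : Q * Q = 1 := by
    ext i j
    rw [Matrix.mul_apply]
    by_cases hi : i ∈ C
    · by_cases hj : j ∈ C
      · have hc0 : (C.card : ℝ) ≠ 0 := ne_of_gt (hcpos i hi)
        simp only [hrow_in i hi, hcol_in j hj]
        rw [Finset.sum_congr rfl (g := fun l =>
            (if l ∈ C then 2/(C.card:ℝ) else 0) * (if l ∈ C then 2/(C.card:ℝ) else 0)
            - (if l ∈ C then 2/(C.card:ℝ) else 0) * (if l = j then 1 else 0)
            - (if i = l then (1:ℝ) else 0) * (if l ∈ C then 2/(C.card:ℝ) else 0)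
            + (if i = l then (1:ℝ) else 0) * (if l = j then 1 else 0))
          (fun l _ => by ring)]
        simp only [Finset.sum_add_distrib, Finset.sum_sub_distrib]
        have e1 : ∑ l : V, (if l ∈ C then 2/(C.card:ℝ) else 0) * (if l ∈ C then 2/(C.card:ℝ) else 0)
            = C.card * (2/(C.card:ℝ) * (2/(C.card:ℝ))) := by
          rw [Finset.sum_congr rfl (g := fun l => if l ∈ C then 2/(C.card:ℝ) * (2/(C.card:ℝ)) else 0)
            (fun l _ => by by_cases hl : l ∈ C <;> simp [hl])]
          rw [Finset.sum_ite_mem, Finset.univ_inter, Finset.sum_const, nsmul_eq_mul]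
        have e2 : ∑ l : V, (if l ∈ C then 2/(C.card:ℝ) else 0) * (if l = j then 1 else 0)
            = 2/(C.card:ℝ) := by
          rw [Finset.sum_congr rfl (g := fun l => if l = j then (if l ∈ C then 2/(C.card:ℝ) else 0) else 0)
            (fun l _ => by by_cases hl : l = j <;> simp [hl])]
          simp [Finset.sum_ite_eq', hj]
        have e3 : ∑ l : V, (if i = l then 1 else 0) * (if l ∈ C then 2/(C.card:ℝ) else 0)
            = 2/(C.card:ℝ) := by
          rw [Finset.sum_congr rfl (g := fun l => if i = l then (if l ∈ C then 2/(C.card:ℝ) else 0) else 0)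
            (fun l _ => by by_cases hl : i = l <;> simp [hl])]
          simp [Finset.sum_ite_eq, hi]
        have e4 : ∑ l : V, (if i = l then (1:ℝ) else 0) * (if l = j then 1 else 0)
            = if i = j then 1 else 0 := by
          rw [Finset.sum_congr rfl (g := fun l => if i = l then (if l = j then (1:ℝ) else 0) else 0)
            (fun l _ => by by_cases hl : i = l <;> simp [hl])]
          simp [Finset.sum_ite_eq]
        rw [e1, e2, e3, e4, Matrix.one_apply]
        by_cases hij : i = j <;> simp [hij] <;> field_simp <;> ring
      · have hij : i ≠ j := fun h => hj (h ▸ hi)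
        simp only [hcol_out j hj]
        rw [Finset.sum_congr rfl (g := fun l => if l = j then Q i l else 0)
          (fun l _ => by by_cases hl : l = j <;> simp [hl])]
        rw [Finset.sum_ite_eq', if_pos (Finset.mem_univ j), hrow_in i hi j, Matrix.one_apply]
        simp [hij, hj]
    · simp only [hrow_out i hi]
      rw [Finset.sum_congr rfl (g := fun l => if i = l then Q l j else 0)
        (fun l _ => by by_cases hl : i = l <;> simp [hl])]
      rw [Finset.sum_ite_eq, if_pos (Finset.mem_univ i)]
      by_cases hij : i = j
      · subst hij; simp [hQ, hi, Matrix.one_apply]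
      · simp [hQ, hi, hij, Matrix.one_apply, fun h : j = i => hij h.symm]
  -- entry description of A'
  have hA'in : ∀ u ∈ C, ∀ v ∈ C, A' u v = A u v := by
    intro u hu v hv
    simp [hA, hA', adjMatrix_apply, hswitch u v, hu, hv]
  have hA'out : ∀ u ∉ C, ∀ v ∉ C, A' u v = A u v := by
    intro u hu v hv
    simp [hA, hA', adjMatrix_apply, hswitch u v, hu, hv]
  have hA'mix : ∀ u ∈ C, ∀ v ∉ C, A' u v =
      if 2 * (Γ.neighborFinset v ∩ C).card = C.card then 1 - A u v else A u v := by
    intro u hu v hv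
    by_cases hp : 2 * (Γ.neighborFinset v ∩ C).card = C.card <;>
      by_cases ha : Γ.Adj u v <;>
      simp [hA, hA', adjMatrix_apply, hswitch u v, hu, hv, hp, ha]
  have hA'mix' : ∀ u ∉ C, ∀ v ∈ C, A' u v =
      if 2 * (Γ.neighborFinset u ∩ C).card = C.card then 1 - A u v else A u v := by
    intro u hu v hv
    by_cases hp : 2 * (Γ.neighborFinset u ∩ C).card = C.card <;>
      by_cases ha : Γ.Adj u v <;>
      simp [hA, hA', adjMatrix_apply, hswitch u v, hu, hv, hp, ha]
  -- degenerate degree facts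
  have hdeg0 : ∀ x, (Γ.neighborFinset x ∩ C).card = 0 → ∀ i ∈ C, A i x = 0 := by
    intro x hx i hi
    have : ¬ Γ.Adj i x := by
      intro h
      have : i ∈ Γ.neighborFinset x ∩ C :=
        Finset.mem_inter.mpr ⟨(mem_neighborFinset _ _ _).mpr h.symm, hi⟩
      simp [Finset.card_eq_zero.mp hx] at this
    simp [hA, adjMatrix_apply, this]
  have hdegc : ∀ x, (Γ.neighborFinset x ∩ C).card = C.card → ∀ i ∈ C, A i x = 1 := by
    intro x hx i hi
    have hsub : Γ.neighborFinset x ∩ C = C :=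
      Finset.eq_of_subset_of_card_le Finset.inter_subset_right (le_of_eq hx.symm)
    have : Γ.Adj i x := by
      have := hsub ▸ hi
      exact ((mem_neighborFinset _ _ _).mp (Finset.mem_inter.mp this).1).symm
    simp [hA, adjMatrix_apply, this]
  have hsym : ∀ u v, A u v = A v u := by
    intro u v
    simp only [hA, adjMatrix_apply]
    exact if_congr ⟨fun h => h.symm, fun h => h.symm⟩ rfl rfl
  -- key identity: Q * A = A' * Q
  have hQA : Q * A = A' * Q := by
    ext i j
    rw [Matrix.mul_apply, Matrix.mul_apply]
    have lhs_out : i ∉ C → ∑ l : V, Q i l * A l j = A i j := by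
      intro hi
      simp only [hrow_out i hi]
      rw [Finset.sum_congr rfl (g := fun l => if i = l then A l j else 0)
        (fun l _ => by by_cases hl : i = l <;> simp [hl])]
      simp [Finset.sum_ite_eq]
    have lhs_in : i ∈ C → ∑ l : V, Q i l * A l j
        = 2/(C.card:ℝ) * ((Γ.neighborFinset j ∩ C).card : ℝ) - A i j := by
      intro hi
      simp only [hrow_in i hi, sub_mul]
      rw [Finset.sum_sub_distrib]
      congr 1
      · rw [Finset.sum_congr rfl (g := fun l => if l ∈ C then 2/(C.card:ℝ) * A l j else 0)
          (fun l _ => by by_cases hl : l ∈ C <;> simp [hl])]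
        rw [Finset.sum_ite_mem, Finset.univ_inter, ← Finset.mul_sum, gm_sum_col]
      · rw [Finset.sum_congr rfl (g := fun l => if i = l then A l j else 0)
          (fun l _ => by by_cases hl : i = l <;> simp [hl])]
        simp [Finset.sum_ite_eq]
    have rhs_out : j ∉ C → ∑ l : V, A' i l * Q l j = A' i j := by
      intro hj
      simp only [hcol_out j hj]
      rw [Finset.sum_congr rfl (g := fun l => if l = j then A' i l else 0)
        (fun l _ => by by_cases hl : l = j <;> simp [hl])]
      simp [Finset.sum_ite_eq']
    have rhs_in : j ∈ C → ∑ l : V, A' i l * Q l j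
        = 2/(C.card:ℝ) * (∑ l ∈ C, A' i l) - A' i j := by
      intro hj
      simp only [hcol_in j hj, mul_sub]
      rw [Finset.sum_sub_distrib]
      congr 1
      · rw [Finset.sum_congr rfl (g := fun l => if l ∈ C then 2/(C.card:ℝ) * A' i l else 0)
          (fun l _ => by by_cases hl : l ∈ C <;> simp [hl, mul_comm])]
        rw [Finset.sum_ite_mem, Finset.univ_inter, ← Finset.mul_sum]
      · rw [Finset.sum_congr rfl (g := fun l => if l = j then A' i l else 0)
          (fun l _ => by by_cases hl : l = j <;> simp [hl])]
        simp [Finset.sum_ite_eq']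
    by_cases hi : i ∈ C <;> by_cases hj : j ∈ C
    · -- both in C
      rw [lhs_in hi, rhs_in hj, hA'in i hi j hj]
      have hs : ∑ l ∈ C, A' i l = ∑ l ∈ C, A i l :=
        Finset.sum_congr rfl (fun l hl => hA'in i hi l hl)
      rw [hs, gm_sum_row, hreg j hj, hreg i hi]
    · -- i ∈ C, j ∉ C
      rw [lhs_in hi, rhs_out hj, hA'mix i hi j hj]
      have hc0 : (C.card : ℝ) ≠ 0 := ne_of_gt (hcpos i hi)
      have hcne : C.card ≠ 0 := fun h => hc0 (by exact_mod_cast h)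
      rcases hD j hj with h0 | h2 | hc
      · rw [h0, if_neg (by omega), hdeg0 j h0 i hi]
        simp
      · rw [if_pos h2]
        have hcast : (2:ℝ) * ((Γ.neighborFinset j ∩ C).card : ℝ) = C.card := by
          exact_mod_cast h2
        field_simp
        linarith
      · rw [hc, if_neg (by omega), hdegc j hc i hi]
        field_simp
        norm_num
    · -- i ∉ C, j ∈ C
      rw [lhs_out hi, rhs_in hj, hA'mix' i hi j hj]
      have hc0 : (C.card : ℝ) ≠ 0 := ne_of_gt (hcpos j hj)
      have hcne : C.card ≠ 0 := fun h => hc0 (by exact_mod_cast h)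
      have hs : ∀ l ∈ C, A' i l =
          if 2 * (Γ.neighborFinset i ∩ C).card = C.card then 1 - A i l else A i l :=
        fun l hl => hA'mix' i hi l hl
      rcases hD i hi with h0 | h2 | hc
      · have hP : ¬ (2 * (Γ.neighborFinset i ∩ C).card = C.card) := by omega
        have hsum : ∑ l ∈ C, A' i l = ((Γ.neighborFinset i ∩ C).card : ℝ) := by
          rw [Finset.sum_congr rfl (fun l hl => by rw [hs l hl, if_neg hP]), gm_sum_row]
        have hAij : A i j = 0 := (hsym i j).trans (hdeg0 i h0 j hj)
        rw [if_neg hP, hsum, h0, hAij]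
        simp
      · have hsum : ∑ l ∈ C, A' i l = (C.card : ℝ) - ((Γ.neighborFinset i ∩ C).card : ℝ) := by
          rw [Finset.sum_congr rfl (fun l hl => by rw [hs l hl, if_pos h2]),
            Finset.sum_sub_distrib, Finset.sum_const, nsmul_eq_mul, mul_one, gm_sum_row]
        have hcast : (2:ℝ) * ((Γ.neighborFinset i ∩ C).card : ℝ) = C.card := by
          exact_mod_cast h2
        rw [if_pos h2, hsum]
        field_simp
        linarith
      · have hP : ¬ (2 * (Γ.neighborFinset i ∩ C).card = C.card) := by omega
        have hsum : ∑ l ∈ C, A' i l = ((Γ.neighborFinset i ∩ C).card : ℝ) := by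
          rw [Finset.sum_congr rfl (fun l hl => by rw [hs l hl, if_neg hP]), gm_sum_row]
        have hAij : A i j = 1 := (hsym i j).trans (hdegc i hc j hj)
        rw [if_neg hP, hsum, hc, hAij]
        field_simp
        norm_num
    · -- both outside C
      rw [lhs_out hi, rhs_out hj, hA'out i hi j hj]
  -- conclude
  have hconj : Q * A * Q = A' := by
    rw [hQA, Matrix.mul_assoc, hQQ, Matrix.mul_one]
  calc A.charpoly = (Q * A * Q).charpoly := (gm_charpoly_conj Q A hQQ).symm
    _ = A'.charpoly := by rw [hconj]
end

section
/- Let Γ be a graph whose vertex set is partitioned as C₁ ∪ C₂ ∪ D, where the induced subgraphs on C₁, C₂, and C₁ ∪ C₂ are regular, |C₁| = |C₂|, the induced subgraphs on C₁ and C₂ have the same degree, and each x ∈ D either has the same number of neighbours in C₁ and C₂, or Γ(x) ∩ (C₁ ∪ C₂) ∈ {C₁, C₂}. Let Γ' be obtained by switching adjacency and non-adjacency between x and C₁ ∪ C₂ whenever Γ(x) ∩ (C₁ ∪ C₂) ∈ {C₁, C₂}. Then Γ and Γ' are cospectral. -/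
open SimpleGraph Matrix Finset

private theorem wqh_charpoly_conj_invol {n R : Type*} [Fintype n] [DecidableEq n] [CommRing R]
    (Q M : Matrix n n R) (hQ : Q * Q = 1) : (Q * M * Q).charpoly = M.charpoly := by
  classical
  have hQc : Q.map Polynomial.C * Q.map Polynomial.C = (1 : Matrix n n (Polynomial R)) := by
    rw [← Matrix.map_mul, hQ]
    simp
  have hcomm : ∀ N : Matrix n n (Polynomial R),
      Matrix.scalar n (Polynomial.X : Polynomial R) * N = N * Matrix.scalar n Polynomial.X := by
    intro N
    rw [scalar_commute]
    exact fun r => Commute.all _ _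
  have hcm : charmatrix (Q * M * Q) = Q.map Polynomial.C * charmatrix M * Q.map Polynomial.C := by
    rw [charmatrix, charmatrix, Matrix.mul_sub, Matrix.sub_mul]
    congr 1
    · rw [Matrix.mul_assoc, hcomm (Q.map Polynomial.C), ← Matrix.mul_assoc, hQc, Matrix.one_mul]
    · simp [RingHom.mapMatrix_apply, Matrix.map_mul]
  rw [Matrix.charpoly, Matrix.charpoly, hcm, det_mul, det_mul]
  have h1 : (Q.map (Polynomial.C : R →+* Polynomial R)).det * (Q.map Polynomial.C).det = 1 := by
    rw [← det_mul, hQc, det_one]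
  calc (Q.map (Polynomial.C : R →+* Polynomial R)).det * (charmatrix M).det *
        (Q.map Polynomial.C).det
      = (charmatrix M).det * ((Q.map Polynomial.C).det * (Q.map Polynomial.C).det) := by ring
    _ = (charmatrix M).det := by rw [h1, mul_one]

set_option maxHeartbeats 1000000 in
/-- Wang–Qiu–Hu switching produces a cospectral graph. -/
theorem wqh_switching_cospectral {V : Type*} [Fintype V] [DecidableEq V]
    (Γ Γ' : SimpleGraph V) [DecidableRel Γ.Adj] [DecidableRel Γ'.Adj]
    (C₁ C₂ : Finset V) (hdisj : Disjoint C₁ C₂) (hcard : C₁.card = C₂.card)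
    (k₁ k : ℕ)
    -- the induced subgraphs on `C₁` and on `C₂` are regular, of the same degree
    (hreg₁ : ∀ v ∈ C₁, (Γ.neighborFinset v ∩ C₁).card = k₁)
    (hreg₂ : ∀ v ∈ C₂, (Γ.neighborFinset v ∩ C₂).card = k₁)
    -- the induced subgraph on `C₁ ∪ C₂` is regular
    (hreg : ∀ v ∈ C₁ ∪ C₂, (Γ.neighborFinset v ∩ (C₁ ∪ C₂)).card = k)
    -- each vertex outside `C₁ ∪ C₂` has the same number of neighbours in `C₁`
    -- and `C₂`, or its neighbourhood in `C₁ ∪ C₂` is `C₁` or `C₂`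
    (hD : ∀ x ∉ C₁ ∪ C₂,
      (Γ.neighborFinset x ∩ C₁).card = (Γ.neighborFinset x ∩ C₂).card ∨
      Γ.neighborFinset x ∩ (C₁ ∪ C₂) = C₁ ∨
      Γ.neighborFinset x ∩ (C₁ ∪ C₂) = C₂)
    -- `Γ'` is obtained by switching adjacency between `C₁ ∪ C₂` and the
    -- special vertices outside `C₁ ∪ C₂`
    (hswitch : ∀ u v, Γ'.Adj u v ↔
      (if (u ∈ C₁ ∪ C₂ ∧ v ∉ C₁ ∪ C₂ ∧
            (Γ.neighborFinset v ∩ (C₁ ∪ C₂) = C₁ ∨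
             Γ.neighborFinset v ∩ (C₁ ∪ C₂) = C₂)) ∨
          (v ∈ C₁ ∪ C₂ ∧ u ∉ C₁ ∪ C₂ ∧
            (Γ.neighborFinset u ∩ (C₁ ∪ C₂) = C₁ ∨
             Γ.neighborFinset u ∩ (C₁ ∪ C₂) = C₂))
        then ¬ Γ.Adj u v else Γ.Adj u v)) :
    (Γ.adjMatrix ℝ).charpoly = (Γ'.adjMatrix ℝ).charpoly := by
  classical
  by_cases hc0 : C₁.card = 0
  · -- degenerate case: `C₁` and `C₂` are empty and nothing is switched
    have h1 : C₁ = ∅ := Finset.card_eq_zero.mp hc0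
    have h2 : C₂ = ∅ := Finset.card_eq_zero.mp (hcard ▸ hc0)
    have hAA : Γ.adjMatrix ℝ = Γ'.adjMatrix ℝ := by
      ext u v
      have h := hswitch u v
      rw [if_neg (by simp [h1, h2])] at h
      simp [adjMatrix_apply, h]
    rw [hAA]
  -- main case
  set A : Matrix V V ℝ := Γ.adjMatrix ℝ with hA
  set A' : Matrix V V ℝ := Γ'.adjMatrix ℝ with hA'
  set c : ℝ := (C₁.card : ℝ) with hcdef
  have hc : c ≠ 0 := by
    simpa [hcdef] using hc0
  set w : V → ℝ := fun x => if x ∈ C₁ then 1 else if x ∈ C₂ then -1 else 0 with hwdef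
  set W : Matrix V V ℝ := vecMulVec w w with hW
  set Q : Matrix V V ℝ := 1 - c⁻¹ • W with hQ
  set a : V → ℝ := fun v =>
    ((Γ.neighborFinset v ∩ C₁).card : ℝ) - ((Γ.neighborFinset v ∩ C₂).card : ℝ) with hadef
  have hnotboth : ∀ x, x ∈ C₁ → x ∈ C₂ → False := fun x h1 h2 =>
    Finset.disjoint_left.mp hdisj h1 h2
  -- basic facts about `w`
  have hwC₁ : ∀ x ∈ C₁, w x = 1 := by intro x hx; simp [hwdef, hx]
  have hwC₂ : ∀ x ∈ C₂, w x = -1 := by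
    intro x hx
    have : x ∉ C₁ := fun h => hnotboth x h hx
    simp [hwdef, hx, this]
  have hwD : ∀ x, x ∉ C₁ ∪ C₂ → w x = 0 := by
    intro x hx
    rw [Finset.mem_union] at hx
    push_neg at hx
    simp [hwdef, hx.1, hx.2]
  have hww : ∀ x, w x * w x = if x ∈ C₁ ∪ C₂ then 1 else 0 := by
    intro x
    by_cases h1 : x ∈ C₁
    · simp [hwC₁ x h1, Finset.mem_union, h1]
    · by_cases h2 : x ∈ C₂
      · simp [hwC₂ x h2, Finset.mem_union, h2]
      · have : x ∉ C₁ ∪ C₂ := by simp [Finset.mem_union, h1, h2]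
        simp [hwD x this, this]
  have hsumww : ∑ x, w x * w x = 2 * c := by
    have : ∑ x, w x * w x = ((C₁ ∪ C₂).card : ℝ) := by
      simp only [hww]
      rw [Finset.sum_ite_mem, Finset.univ_inter]
      simp
    rw [this, Finset.card_union_of_disjoint hdisj, hcdef, ← hcard]
    push_cast
    ring
  -- column sums of the adjacency matrix against `w`
  have hsum_in : ∀ (s : Finset V) (v : V),
      ∑ x ∈ s, A x v = ((Γ.neighborFinset v ∩ s).card : ℝ) := by
    intro s v
    simp only [hA, adjMatrix_apply, Finset.sum_boole]
    norm_cast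
    congr 1
    ext y
    simp [adj_comm, and_comm]
  have ha : ∀ v, ∑ x, w x * A x v = a v := by
    intro v
    have step : ∀ x, w x * A x v =
        (if x ∈ C₁ then A x v else 0) - (if x ∈ C₂ then A x v else 0) := by
      intro x
      by_cases h1 : x ∈ C₁
      · have h2 : x ∉ C₂ := fun h => hnotboth x h1 h
        simp [hwdef, h1, h2]
      · by_cases h2 : x ∈ C₂
        · simp [hwdef, h1, h2]
        · simp [hwdef, h1, h2]
    rw [Finset.sum_congr rfl fun x _ => step x, Finset.sum_sub_distrib,
      Finset.sum_ite_mem, Finset.sum_ite_mem, Finset.univ_inter, Finset.univ_inter,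
      hsum_in, hsum_in]
  have hAsymm : ∀ u v, A u v = A v u := by
    intro u v
    simp [hA, adjMatrix_apply, adj_comm]
  have hb : ∀ u, ∑ y, A u y * w y = a u := by
    intro u
    rw [← ha u]
    exact Finset.sum_congr rfl fun y _ => by rw [hAsymm u y, mul_comm]
  -- splitting neighbourhood counts
  have hsplit : ∀ v, ((Γ.neighborFinset v ∩ (C₁ ∪ C₂)).card : ℝ) =
      ((Γ.neighborFinset v ∩ C₁).card : ℝ) + ((Γ.neighborFinset v ∩ C₂).card : ℝ) := by
    intro v
    rw [Finset.inter_union_distrib_left, Finset.card_union_of_disjoint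
      (hdisj.mono (Finset.inter_subset_right) (Finset.inter_subset_right))]
    push_cast
    ring
  have haC : ∀ v ∈ C₁ ∪ C₂, a v = (2 * (k₁ : ℝ) - (k : ℝ)) * w v := by
    intro v hv
    have hk := hreg v hv
    rcases Finset.mem_union.mp hv with h1 | h2
    · have e1 : ((Γ.neighborFinset v ∩ C₁).card : ℝ) = (k₁ : ℝ) := by
        exact_mod_cast hreg₁ v h1
      have e2 := hsplit v
      rw [hk, e1] at e2
      rw [hadef]
      simp only [e1, hwC₁ v h1]
      linarith
    · have e1 : ((Γ.neighborFinset v ∩ C₂).card : ℝ) = (k₁ : ℝ) := by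
        exact_mod_cast hreg₂ v h2
      have e2 := hsplit v
      rw [hk, e1] at e2
      rw [hadef]
      simp only [e1, hwC₂ v h2]
      linarith
  -- neighbourhood counts for special vertices
  have hinter : ∀ (v : V) (s : Finset V), s ⊆ C₁ ∪ C₂ →
      Γ.neighborFinset v ∩ s = (Γ.neighborFinset v ∩ (C₁ ∪ C₂)) ∩ s := by
    intro v s hs
    rw [Finset.inter_assoc]
    congr 1
    exact (Finset.inter_eq_right.mpr hs).symm
  have hsp1 : ∀ v, Γ.neighborFinset v ∩ (C₁ ∪ C₂) = C₁ → a v = c := by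
    intro v hvsp
    have e1 : Γ.neighborFinset v ∩ C₁ = C₁ := by
      rw [hinter v C₁ Finset.subset_union_left, hvsp, Finset.inter_self]
    have e2 : Γ.neighborFinset v ∩ C₂ = ∅ := by
      rw [hinter v C₂ Finset.subset_union_right, hvsp,
        Finset.disjoint_iff_inter_eq_empty.mp hdisj]
    rw [hadef]
    simp [e1, e2, hcdef]
  have hsp2 : ∀ v, Γ.neighborFinset v ∩ (C₁ ∪ C₂) = C₂ → a v = -c := by
    intro v hvsp
    have e1 : Γ.neighborFinset v ∩ C₁ = ∅ := by
      rw [hinter v C₁ Finset.subset_union_left, hvsp, Finset.inter_comm,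
        Finset.disjoint_iff_inter_eq_empty.mp hdisj]
    have e2 : Γ.neighborFinset v ∩ C₂ = C₂ := by
      rw [hinter v C₂ Finset.subset_union_right, hvsp, Finset.inter_self]
    rw [hadef]
    simp [e1, e2, hcdef, hcard]
  -- the quadratic form
  set S : ℝ := ∑ y, a y * w y with hSdef
  have hS : S = 2 * c * (2 * (k₁ : ℝ) - (k : ℝ)) := by
    have step : ∀ y, a y * w y = (2 * (k₁ : ℝ) - (k : ℝ)) * (w y * w y) := by
      intro y
      by_cases hy : y ∈ C₁ ∪ C₂
      · rw [haC y hy]; ring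
      · rw [hwD y hy]; ring
    rw [hSdef, Finset.sum_congr rfl fun y _ => step y, ← Finset.mul_sum, hsumww]
    ring
  -- matrix product entries
  have hWM : ∀ (M : Matrix V V ℝ) (u y : V), (W * M) u y = w u * ∑ x, w x * M x y := by
    intro M u y
    simp only [hW, Matrix.mul_apply, vecMulVec_apply, mul_assoc, Finset.mul_sum]
  have hMW : ∀ (M : Matrix V V ℝ) (u y : V), (M * W) u y = (∑ x, M u x * w x) * w y := by
    intro M u y
    simp only [hW, Matrix.mul_apply, vecMulVec_apply, Finset.sum_mul, mul_assoc]
  -- Q is an involution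
  have hWW : W * W = (2 * c) • W := by
    ext u y
    rw [hWM]
    have : ∑ x, w x * W x y = (∑ x, w x * w x) * w y := by
      simp only [hW, vecMulVec_apply, Finset.sum_mul, mul_assoc]
    rw [this, hsumww]
    simp only [Matrix.smul_apply, hW, vecMulVec_apply, smul_eq_mul]
    ring
  have hQQ : Q * Q = 1 := by
    have expand : Q * Q = 1 - c⁻¹ • W - c⁻¹ • W + (c⁻¹ * c⁻¹) • (W * W) := by
      rw [hQ]
      simp only [Matrix.sub_mul, Matrix.mul_sub, Matrix.one_mul, Matrix.mul_one,
        Matrix.smul_mul, Matrix.mul_smul, smul_smul, ← hW]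
      module
    rw [expand, hWW, smul_smul]
    have hco : c⁻¹ * c⁻¹ * (2 * c) = c⁻¹ + c⁻¹ := by
      field_simp
      ring
    rw [hco, add_smul]
    abel
  -- the conjugated matrix entrywise
  have hQAQ : ∀ u v, (Q * A * Q) u v =
      A u v - c⁻¹ * (w u * a v) - c⁻¹ * (a u * w v) + (c⁻¹ * c⁻¹) * (w u * S * w v) := by
    intro u v
    have e1 : Q * A * Q = A - c⁻¹ • (W * A) - c⁻¹ • (A * W) + (c⁻¹ * c⁻¹) • (W * A * W) := by
      rw [hQ]
      simp only [Matrix.sub_mul, Matrix.mul_sub, Matrix.one_mul, Matrix.mul_one,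
        Matrix.smul_mul, Matrix.mul_smul, smul_smul, ← hW]
      module
    rw [e1]
    simp only [Matrix.add_apply, Matrix.sub_apply, Matrix.smul_apply, smul_eq_mul]
    rw [hWM A u v, ha v, hMW A u v, hb u, hMW (W * A) u v]
    have : ∑ x, (W * A) u x * w x = w u * S := by
      rw [hSdef, Finset.mul_sum]
      refine Finset.sum_congr rfl fun x _ => ?_
      rw [hWM A u x, ha x]
      ring
    rw [this]
  -- key: conjugation realises the switching
  have hkey : Q * A * Q = A' := by
    ext u v
    rw [hQAQ u v]
    have hsw := hswitch u v
    by_cases hu : u ∈ C₁ ∪ C₂ <;> by_cases hv : v ∈ C₁ ∪ C₂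
    · -- both inside
      rw [if_neg (by simp [hu, hv])] at hsw
      have e : A' u v = A u v := by simp [hA, hA', adjMatrix_apply, hsw]
      rw [e, haC u hu, haC v hv, hS]
      field_simp
      ring
    · -- u inside, v outside
      by_cases hspv : Γ.neighborFinset v ∩ (C₁ ∪ C₂) = C₁ ∨
          Γ.neighborFinset v ∩ (C₁ ∪ C₂) = C₂
      · rw [if_pos (Or.inl ⟨hu, hv, hspv⟩)] at hsw
        have e : A' u v = 1 - A u v := by
          by_cases hadj : Γ.Adj u v
          · simp [hA, hA', adjMatrix_apply, hadj, hsw.not.mpr (not_not.mpr hadj)]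
          · simp [hA, hA', adjMatrix_apply, hadj, hsw.mpr hadj]
        rw [e, hwD v hv]
        rcases hspv with hsp | hsp
        · rw [hsp1 v hsp]
          rcases Finset.mem_union.mp hu with h1 | h2
          · have hadj : Γ.Adj u v := by
              have : u ∈ Γ.neighborFinset v := by
                have : u ∈ Γ.neighborFinset v ∩ (C₁ ∪ C₂) := by rw [hsp]; exact h1
                exact Finset.mem_inter.mp this |>.1
              rw [mem_neighborFinset] at this
              exact this.symm
            have eA : A u v = 1 := by simp [hA, adjMatrix_apply, hadj]
            rw [eA, hwC₁ u h1]
            field_simp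
            ring
          · have hadj : ¬ Γ.Adj u v := by
              intro hadj
              have : u ∈ Γ.neighborFinset v ∩ (C₁ ∪ C₂) :=
                Finset.mem_inter.mpr ⟨(mem_neighborFinset _ _ _).mpr hadj.symm, hu⟩
              rw [hsp] at this
              exact hnotboth u this h2
            have eA : A u v = 0 := by simp [hA, adjMatrix_apply, hadj]
            rw [eA, hwC₂ u h2]
            field_simp
            ring
        · rw [hsp2 v hsp]
          rcases Finset.mem_union.mp hu with h1 | h2
          · have hadj : ¬ Γ.Adj u v := by
              intro hadj
              have : u ∈ Γ.neighborFinset v ∩ (C₁ ∪ C₂) :=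
                Finset.mem_inter.mpr ⟨(mem_neighborFinset _ _ _).mpr hadj.symm, hu⟩
              rw [hsp] at this
              exact hnotboth u h1 this
            have eA : A u v = 0 := by simp [hA, adjMatrix_apply, hadj]
            rw [eA, hwC₁ u h1]
            field_simp
            ring
          · have hadj : Γ.Adj u v := by
              have : u ∈ Γ.neighborFinset v := by
                have : u ∈ Γ.neighborFinset v ∩ (C₁ ∪ C₂) := by rw [hsp]; exact h2
                exact Finset.mem_inter.mp this |>.1
              rw [mem_neighborFinset] at this
              exact this.symm
            have eA : A u v = 1 := by simp [hA, adjMatrix_apply, hadj]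
            rw [eA, hwC₂ u h2]
            field_simp
            ring
      · rw [if_neg (by
            rintro (⟨_, _, h⟩ | ⟨_, hu', _⟩)
            · exact hspv h
            · exact hu' hu)] at hsw
        have e : A' u v = A u v := by simp [hA, hA', adjMatrix_apply, hsw]
        have hav : a v = 0 := by
          rcases hD v hv with hbal | hsp | hsp
          · rw [hadef]; simp [hbal]
          · exact absurd (Or.inl hsp) hspv
          · exact absurd (Or.inr hsp) hspv
        rw [e, hav, hwD v hv]
        ring
    · -- u outside, v inside
      by_cases hspu : Γ.neighborFinset u ∩ (C₁ ∪ C₂) = C₁ ∨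
          Γ.neighborFinset u ∩ (C₁ ∪ C₂) = C₂
      · rw [if_pos (Or.inr ⟨hv, hu, hspu⟩)] at hsw
        have e : A' u v = 1 - A u v := by
          by_cases hadj : Γ.Adj u v
          · simp [hA, hA', adjMatrix_apply, hadj, hsw.not.mpr (not_not.mpr hadj)]
          · simp [hA, hA', adjMatrix_apply, hadj, hsw.mpr hadj]
        rw [e, hwD u hu]
        rcases hspu with hsp | hsp
        · rw [hsp1 u hsp]
          rcases Finset.mem_union.mp hv with h1 | h2
          · have hadj : Γ.Adj u v := by
              have : v ∈ Γ.neighborFinset u := by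
                have : v ∈ Γ.neighborFinset u ∩ (C₁ ∪ C₂) := by rw [hsp]; exact h1
                exact Finset.mem_inter.mp this |>.1
              rw [mem_neighborFinset] at this
              exact this
            have eA : A u v = 1 := by simp [hA, adjMatrix_apply, hadj]
            rw [eA, hwC₁ v h1]
            field_simp
            ring
          · have hadj : ¬ Γ.Adj u v := by
              intro hadj
              have : v ∈ Γ.neighborFinset u ∩ (C₁ ∪ C₂) :=
                Finset.mem_inter.mpr ⟨(mem_neighborFinset _ _ _).mpr hadj, hv⟩
              rw [hsp] at this
              exact hnotboth v this h2
            have eA : A u v = 0 := by simp [hA, adjMatrix_apply, hadj]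
            rw [eA, hwC₂ v h2]
            field_simp
            ring
        · rw [hsp2 u hsp]
          rcases Finset.mem_union.mp hv with h1 | h2
          · have hadj : ¬ Γ.Adj u v := by
              intro hadj
              have : v ∈ Γ.neighborFinset u ∩ (C₁ ∪ C₂) :=
                Finset.mem_inter.mpr ⟨(mem_neighborFinset _ _ _).mpr hadj, hv⟩
              rw [hsp] at this
              exact hnotboth v h1 this
            have eA : A u v = 0 := by simp [hA, adjMatrix_apply, hadj]
            rw [eA, hwC₁ v h1]
            field_simp
            ring
          · have hadj : Γ.Adj u v := by
              have : v ∈ Γ.neighborFinset u := by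
                have : v ∈ Γ.neighborFinset u ∩ (C₁ ∪ C₂) := by rw [hsp]; exact h2
                exact Finset.mem_inter.mp this |>.1
              rw [mem_neighborFinset] at this
              exact this
            have eA : A u v = 1 := by simp [hA, adjMatrix_apply, hadj]
            rw [eA, hwC₂ v h2]
            field_simp
            ring
      · rw [if_neg (by
            rintro (⟨_, hv', _⟩ | ⟨_, _, h⟩)
            · exact hv' hv
            · exact hspu h)] at hsw
        have e : A' u v = A u v := by simp [hA, hA', adjMatrix_apply, hsw]
        have hau : a u = 0 := by
          rcases hD u hu with hbal | hsp | hsp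
          · rw [hadef]; simp [hbal]
          · exact absurd (Or.inl hsp) hspu
          · exact absurd (Or.inr hsp) hspu
        rw [e, hau, hwD u hu]
        ring
    · -- both outside
      rw [if_neg (by
          rintro (⟨hu', _, _⟩ | ⟨hv', _, _⟩)
          · exact hu hu'
          · exact hv hv')] at hsw
      have e : A' u v = A u v := by simp [hA, hA', adjMatrix_apply, hsw]
      rw [e, hwD u hu, hwD v hv]
      ring
  rw [← hkey]
  exact (wqh_charpoly_conj_invol Q A hQQ).symm
end

section
/- Applying Wang–Qiu–Hu switching to a connected strongly regular graph with parameters (n, k, λ, μ) (with 0 < μ and the switched graph connected) yields a strongly regular graph with the same parameters (n, k, λ, μ). -/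
open SimpleGraph Matrix Finset

private theorem my_srg_congr {V : Type*} [Fintype V] {G H : SimpleGraph V}
    [DecidableRel G.Adj] [DecidableRel H.Adj] (h : G = H) {n k l m : ℕ}
    (hs : G.IsSRGWith n k l m) : H.IsSRGWith n k l m := by
  subst h
  convert hs using 2

private theorem my_compl_adjMatrix {V : Type*} [Fintype V] [DecidableEq V]
    (G : SimpleGraph V) [DecidableRel G.Adj] :
    Gᶜ.adjMatrix ℚ = (Matrix.of fun _ _ => (1:ℚ)) - 1 - G.adjMatrix ℚ := by
  ext u v
  by_cases h1 : u = v
  · subst h1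
    simp [adjMatrix_apply]
  · by_cases h2 : G.Adj u v <;>
      simp [adjMatrix_apply, compl_adj, h1, h2, Matrix.one_apply]

private theorem my_isSRGWith_of_matrix {V : Type*} [Fintype V] [DecidableEq V]
    (G : SimpleGraph V) [DecidableRel G.Adj] (n k l m : ℕ) (hn : Fintype.card V = n)
    (heq : G.adjMatrix ℚ * G.adjMatrix ℚ =
      k • (1 : Matrix V V ℚ) + l • G.adjMatrix ℚ + m • (Gᶜ.adjMatrix ℚ)) :
    G.IsSRGWith n k l m := by
  constructor
  · exact hn
  · intro v
    have h := congrFun (congrFun heq v) v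
    rw [adjMatrix_mul_self_apply_self] at h
    simp only [Matrix.add_apply, Matrix.smul_apply, Matrix.one_apply_eq,
      adjMatrix_apply, SimpleGraph.irrefl, if_false, compl_adj, ne_eq,
      not_true_eq_false, false_and, smul_eq_mul, mul_zero, mul_one, add_zero,
      smul_zero] at h
    rw [nsmul_eq_mul, mul_one] at h
    exact_mod_cast h
  · intro u v hadj
    have h := congrFun (congrFun heq u) v
    rw [show G.adjMatrix ℚ * G.adjMatrix ℚ = G.adjMatrix ℚ ^ 2 from (sq _).symm,
      adjMatrix_pow_apply_eq_card_walk] at h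
    simp only [Set.coe_setOf] at h
    rw [Fintype.card_congr (G.walkLengthTwoEquivCommonNeighbors u v)] at h
    have hne : u ≠ v := hadj.ne
    simp only [Matrix.add_apply, Matrix.smul_apply, Matrix.one_apply_ne hne,
      adjMatrix_apply, hadj, if_true, compl_adj, hne, ne_eq, not_true_eq_false,
      and_false, if_false, smul_eq_mul, mul_zero, mul_one, zero_add,
      smul_zero, add_zero, not_false_eq_true, true_and] at h
    rw [nsmul_eq_mul, mul_one] at h
    exact_mod_cast h
  · intro u v hne hnadj
    have h := congrFun (congrFun heq u) v
    rw [show G.adjMatrix ℚ * G.adjMatrix ℚ = G.adjMatrix ℚ ^ 2 from (sq _).symm,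
      adjMatrix_pow_apply_eq_card_walk] at h
    simp only [Set.coe_setOf] at h
    rw [Fintype.card_congr (G.walkLengthTwoEquivCommonNeighbors u v)] at h
    simp only [Matrix.add_apply, Matrix.smul_apply, Matrix.one_apply_ne hne,
      adjMatrix_apply, hnadj, if_false, compl_adj, hne, ne_eq,
      smul_eq_mul, mul_zero, mul_one, zero_add, smul_zero, add_zero,
      not_false_eq_true, true_and, if_true] at h
    rw [nsmul_eq_mul, mul_one] at h
    exact_mod_cast h

set_option maxHeartbeats 1000000 in
/-- WQH switching applied to a connected strongly regular graph (with `0 < μ`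
and connected switched graph) yields a strongly regular graph with the same
parameters. -/
theorem wqh_switching_srg {V : Type*} [Fintype V] [DecidableEq V]
    (Γ Γ' : SimpleGraph V) [DecidableRel Γ.Adj] [DecidableRel Γ'.Adj]
    (C₁ C₂ : Finset V) (hdisj : Disjoint C₁ C₂) (hcard : C₁.card = C₂.card)
    (k₁ k : ℕ)
    (hreg₁ : ∀ v ∈ C₁, (Γ.neighborFinset v ∩ C₁).card = k₁)
    (hreg₂ : ∀ v ∈ C₂, (Γ.neighborFinset v ∩ C₂).card = k₁)
    (hreg : ∀ v ∈ C₁ ∪ C₂, (Γ.neighborFinset v ∩ (C₁ ∪ C₂)).card = k)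
    (hD : ∀ x ∉ C₁ ∪ C₂,
      (Γ.neighborFinset x ∩ C₁).card = (Γ.neighborFinset x ∩ C₂).card ∨
      Γ.neighborFinset x ∩ (C₁ ∪ C₂) = C₁ ∨
      Γ.neighborFinset x ∩ (C₁ ∪ C₂) = C₂)
    (hswitch : ∀ u v, Γ'.Adj u v ↔
      (if (u ∈ C₁ ∪ C₂ ∧ v ∉ C₁ ∪ C₂ ∧
            (Γ.neighborFinset v ∩ (C₁ ∪ C₂) = C₁ ∨
             Γ.neighborFinset v ∩ (C₁ ∪ C₂) = C₂)) ∨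
          (v ∈ C₁ ∪ C₂ ∧ u ∉ C₁ ∪ C₂ ∧
            (Γ.neighborFinset u ∩ (C₁ ∪ C₂) = C₁ ∨
             Γ.neighborFinset u ∩ (C₁ ∪ C₂) = C₂))
        then ¬ Γ.Adj u v else Γ.Adj u v))
    (n kk l m : ℕ) (hsrg : Γ.IsSRGWith n kk l m) (hmu : 0 < m)
    (hconn : Γ.Connected) (hconn' : Γ'.Connected) :
    Γ'.IsSRGWith n kk l m := by
  classical
  rcases C₁.eq_empty_or_nonempty with hC1e | hC1ne
  · have hC2e : C₂ = ∅ := Finset.card_eq_zero.mp (by rw [← hcard, hC1e, Finset.card_empty])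
    have hGG : Γ = Γ' := by
      ext u v
      rw [hswitch u v]
      simp [hC1e, hC2e]
    exact my_srg_congr hGG hsrg
  have hc0 : (0:ℚ) < (C₁.card : ℚ) := by exact_mod_cast hC1ne.card_pos
  set c : ℚ := (C₁.card : ℚ) with hcdef
  have hc : c ≠ 0 := ne_of_gt hc0
  set w : V → ℚ := fun v => (if v ∈ C₁ then 1 else 0) - (if v ∈ C₂ then 1 else 0) with hwdef
  have hw1 : ∀ u ∈ C₁, w u = 1 := by
    intro u hu
    have h2 : u ∉ C₂ := fun h => Finset.disjoint_left.mp hdisj hu h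
    simp [hwdef, hu, h2]
  have hw2 : ∀ u ∈ C₂, w u = -1 := by
    intro u hu
    have h1 : u ∉ C₁ := fun h => Finset.disjoint_left.mp hdisj h hu
    simp [hwdef, hu, h1]
  have hw0 : ∀ u, u ∉ C₁ ∪ C₂ → w u = 0 := by
    intro u hu
    rw [Finset.mem_union] at hu
    push_neg at hu
    simp [hwdef, hu.1, hu.2]
  have hwsum : ∑ x, w x = 0 := by
    simp only [hwdef, Finset.sum_sub_distrib, Finset.sum_boole]
    rw [Finset.filter_mem_eq_inter, Finset.filter_mem_eq_inter, Finset.univ_inter,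
      Finset.univ_inter, hcard, sub_self]
  have hwsq : ∑ x, w x * w x = 2 * c := by
    have hpt : ∀ x, w x * w x = (if x ∈ C₁ then (1:ℚ) else 0) + (if x ∈ C₂ then 1 else 0) := by
      intro x
      by_cases h1 : x ∈ C₁
      · have h2 : x ∉ C₂ := fun h => Finset.disjoint_left.mp hdisj h1 h
        simp [hwdef, h1, h2]
      · by_cases h2 : x ∈ C₂ <;> simp [hwdef, h1, h2]
    rw [Finset.sum_congr rfl fun x _ => hpt x, Finset.sum_add_distrib]
    simp only [Finset.sum_boole]
    rw [Finset.filter_mem_eq_inter, Finset.filter_mem_eq_inter, Finset.univ_inter,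
      Finset.univ_inter, ← hcard, ← hcdef]
    ring
  set A : Matrix V V ℚ := Γ.adjMatrix ℚ with hAdef
  set A' : Matrix V V ℚ := Γ'.adjMatrix ℚ with hA'def
  set g : V → ℚ := fun u => ∑ x, A u x * w x with hgdef
  have hsymA : ∀ u v, A u v = A v u := by
    intro u v
    by_cases h : Γ.Adj u v
    · simp [hAdef, adjMatrix_apply, h, h.symm]
    · have h' : ¬ Γ.Adj v u := fun hh => h hh.symm
      simp [hAdef, adjMatrix_apply, h, h']
  have hg : ∀ u, g u = ((Γ.neighborFinset u ∩ C₁).card : ℚ)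
      - ((Γ.neighborFinset u ∩ C₂).card : ℚ) := by
    intro u
    have step : g u = ∑ x ∈ Γ.neighborFinset u, w x := by
      rw [hgdef, hAdef]
      exact Γ.adjMatrix_mulVec_apply u w
    rw [step]
    simp only [hwdef, Finset.sum_sub_distrib, Finset.sum_boole]
    rw [Finset.filter_mem_eq_inter, Finset.filter_mem_eq_inter]
  have hcardsum : ∀ u, (Γ.neighborFinset u ∩ C₁).card + (Γ.neighborFinset u ∩ C₂).card
      = (Γ.neighborFinset u ∩ (C₁ ∪ C₂)).card := by
    intro u
    rw [Finset.inter_union_distrib_left]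
    exact (Finset.card_union_of_disjoint
      (hdisj.mono Finset.inter_subset_right Finset.inter_subset_right)).symm
  set al : ℚ := 2 * (k₁:ℚ) - (k:ℚ) with haldef
  have hgC : ∀ u ∈ C₁ ∪ C₂, g u = al * w u := by
    intro u hu
    rcases Finset.mem_union.mp hu with h1 | h2
    · have e1 := hreg₁ u h1
      have e2 := hcardsum u
      rw [hreg u hu, e1] at e2
      have e3 : ((Γ.neighborFinset u ∩ C₂).card : ℚ) = (k:ℚ) - (k₁:ℚ) := by
        have : (k₁:ℚ) + ((Γ.neighborFinset u ∩ C₂).card : ℚ) = (k:ℚ) := by exact_mod_cast e2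
        linarith
      rw [hg u, hw1 u h1, e1, e3, haldef]
      ring
    · have e1 := hreg₂ u h2
      have e2 := hcardsum u
      rw [hreg u hu, e1] at e2
      have e3 : ((Γ.neighborFinset u ∩ C₁).card : ℚ) = (k:ℚ) - (k₁:ℚ) := by
        have : ((Γ.neighborFinset u ∩ C₁).card : ℚ) + (k₁:ℚ) = (k:ℚ) := by exact_mod_cast e2
        linarith
      rw [hg u, hw2 u h2, e1, e3, haldef]
      ring
  have hs : ∑ x, w x * g x = 2 * c * al := by
    have hpt : ∀ x, w x * g x = al * (w x * w x) := by
      intro x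
      by_cases hx : x ∈ C₁ ∪ C₂
      · rw [hgC x hx]; ring
      · rw [hw0 x hx]; ring
    rw [Finset.sum_congr rfl fun x _ => hpt x, ← Finset.mul_sum, hwsq]
    ring
  set P : Matrix V V ℚ := Matrix.of fun u v => c⁻¹ * (w u * w v) with hPdef
  set Q : Matrix V V ℚ := 1 - P with hQdef
  have hPM : ∀ (M : Matrix V V ℚ) (u v : V),
      (P * M) u v = c⁻¹ * w u * (∑ x, w x * M x v) := by
    intro M u v
    rw [Matrix.mul_apply, Finset.mul_sum]
    refine Finset.sum_congr rfl fun x _ => ?_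
    simp only [hPdef, Matrix.of_apply]
    ring
  have hMP : ∀ (M : Matrix V V ℚ) (u v : V),
      (M * P) u v = c⁻¹ * (∑ x, M u x * w x) * w v := by
    intro M u v
    rw [Matrix.mul_apply]
    calc ∑ x, M u x * P x v = ∑ x, (M u x * w x) * (c⁻¹ * w v) := by
          refine Finset.sum_congr rfl fun x _ => ?_
          simp only [hPdef, Matrix.of_apply]
          ring
      _ = (∑ x, M u x * w x) * (c⁻¹ * w v) := by rw [← Finset.sum_mul]
      _ = c⁻¹ * (∑ x, M u x * w x) * w v := by ring
  have hgalt : ∀ v, ∑ x, w x * A x v = g v := by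
    intro v
    rw [hgdef]
    refine Finset.sum_congr rfl fun x _ => ?_
    rw [hsymA x v]
    ring
  have hAP : ∀ u v, (A * P) u v = c⁻¹ * g u * w v := by
    intro u v
    rw [hMP]
  have hPA : ∀ u v, (P * A) u v = c⁻¹ * w u * g v := by
    intro u v
    rw [hPM, hgalt]
  have hPAP : ∀ u v, (P * (A * P)) u v = c⁻¹ * w u * (c⁻¹ * (2 * c * al) * w v) := by
    intro u v
    rw [hPM]
    congr 1
    calc ∑ x, w x * (A * P) x v = ∑ x, (w x * g x) * (c⁻¹ * w v) := by
          refine Finset.sum_congr rfl fun x _ => ?_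
          rw [hAP]
          ring
      _ = (∑ x, w x * g x) * (c⁻¹ * w v) := by rw [← Finset.sum_mul]
      _ = c⁻¹ * (2 * c * al) * w v := by rw [hs]; ring
  have hQsplit : Q * A * Q = A - P * A - A * P + P * (A * P) := by
    rw [hQdef]
    noncomm_ring
  have hE : ∀ u v, (Q * A * Q) u v
      = A u v - c⁻¹ * w u * g v - c⁻¹ * g u * w v + c⁻¹ * w u * (c⁻¹ * (2 * c * al) * w v) := by
    intro u v
    rw [hQsplit]
    simp only [Matrix.sub_apply, Matrix.add_apply]
    rw [hPA, hAP, hPAP]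
  have keyCC : ∀ u v, u ∈ C₁ ∪ C₂ → v ∈ C₁ ∪ C₂ → (Q * A * Q) u v = A' u v := by
    intro u v hu hv
    have hadj : Γ'.Adj u v ↔ Γ.Adj u v := by
      rw [hswitch u v]
      simp [hu, hv]
    have hAA' : A' u v = A u v := by
      simp only [hA'def, hAdef, adjMatrix_apply, hadj]
    rw [hE u v, hgC u hu, hgC v hv, hAA']
    field_simp
    ring
  have keyCD : ∀ u v, u ∈ C₁ ∪ C₂ → v ∉ C₁ ∪ C₂ → (Q * A * Q) u v = A' u v := by
    intro u v hu hv
    have hwv : w v = 0 := hw0 v hv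
    by_cases htype : Γ.neighborFinset v ∩ (C₁ ∪ C₂) = C₁ ∨
        Γ.neighborFinset v ∩ (C₁ ∪ C₂) = C₂
    · have hadj : Γ'.Adj u v ↔ ¬ Γ.Adj u v := by
        rw [hswitch u v, if_pos (Or.inl ⟨hu, hv, htype⟩)]
      rcases htype with ht | ht
      · have hN1 : Γ.neighborFinset v ∩ C₁ = C₁ := by
          have e : Γ.neighborFinset v ∩ C₁
              = (Γ.neighborFinset v ∩ (C₁ ∪ C₂)) ∩ C₁ := by
            rw [Finset.inter_assoc, Finset.union_inter_cancel_left]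
          rw [e, ht, Finset.inter_self]
        have hN2 : Γ.neighborFinset v ∩ C₂ = ∅ := by
          have e : Γ.neighborFinset v ∩ C₂
              = (Γ.neighborFinset v ∩ (C₁ ∪ C₂)) ∩ C₂ := by
            rw [Finset.inter_assoc, Finset.union_inter_cancel_right]
          rw [e, ht, Finset.disjoint_iff_inter_eq_empty.mp hdisj]
        have hgv : g v = c := by
          rw [hg v, hN1, hN2]
          simp [hcdef]
        rw [hE u v, hgv, hwv]
        rcases Finset.mem_union.mp hu with h1 | h2
        · have hadj1 : Γ.Adj u v := by
            have : u ∈ Γ.neighborFinset v := (Finset.mem_inter.mp (hN1.symm ▸ h1)).1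
            exact ((Γ.mem_neighborFinset v u).mp this).symm
          have hA1 : A u v = 1 := by simp [hAdef, adjMatrix_apply, hadj1]
          have hA'0 : A' u v = 0 := by
            simp only [hA'def, adjMatrix_apply]
            rw [if_neg (fun h => (hadj.mp h) hadj1)]
          rw [hA1, hA'0, hw1 u h1]
          field_simp
          ring
        · have hnadj : ¬ Γ.Adj u v := by
            intro hadj1
            have : u ∈ Γ.neighborFinset v ∩ C₂ :=
              Finset.mem_inter.mpr ⟨(Γ.mem_neighborFinset v u).mpr hadj1.symm, h2⟩
            rw [hN2] at this
            exact absurd this (Finset.notMem_empty u)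
          have hA0 : A u v = 0 := by simp [hAdef, adjMatrix_apply, hnadj]
          have hA'1 : A' u v = 1 := by
            simp only [hA'def, adjMatrix_apply]
            rw [if_pos (hadj.mpr hnadj)]
          rw [hA0, hA'1, hw2 u h2]
          field_simp
          ring
      · have hN2 : Γ.neighborFinset v ∩ C₂ = C₂ := by
          have e : Γ.neighborFinset v ∩ C₂
              = (Γ.neighborFinset v ∩ (C₁ ∪ C₂)) ∩ C₂ := by
            rw [Finset.inter_assoc, Finset.union_inter_cancel_right]
          rw [e, ht, Finset.inter_self]
        have hN1 : Γ.neighborFinset v ∩ C₁ = ∅ := by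
          have e : Γ.neighborFinset v ∩ C₁
              = (Γ.neighborFinset v ∩ (C₁ ∪ C₂)) ∩ C₁ := by
            rw [Finset.inter_assoc, Finset.union_inter_cancel_left]
          rw [e, ht]
          exact Finset.disjoint_iff_inter_eq_empty.mp hdisj.symm
        have hgv : g v = -c := by
          rw [hg v, hN1, hN2, hcdef, hcard]
          simp
        rw [hE u v, hgv, hwv]
        rcases Finset.mem_union.mp hu with h1 | h2
        · have hnadj : ¬ Γ.Adj u v := by
            intro hadj1
            have : u ∈ Γ.neighborFinset v ∩ C₁ :=
              Finset.mem_inter.mpr ⟨(Γ.mem_neighborFinset v u).mpr hadj1.symm, h1⟩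
            rw [hN1] at this
            exact absurd this (Finset.notMem_empty u)
          have hA0 : A u v = 0 := by simp [hAdef, adjMatrix_apply, hnadj]
          have hA'1 : A' u v = 1 := by
            simp only [hA'def, adjMatrix_apply]
            rw [if_pos (hadj.mpr hnadj)]
          rw [hA0, hA'1, hw1 u h1]
          field_simp
          ring
        · have hadj1 : Γ.Adj u v := by
            have : u ∈ Γ.neighborFinset v := (Finset.mem_inter.mp (hN2.symm ▸ h2)).1
            exact ((Γ.mem_neighborFinset v u).mp this).symm
          have hA1 : A u v = 1 := by simp [hAdef, adjMatrix_apply, hadj1]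
          have hA'0 : A' u v = 0 := by
            simp only [hA'def, adjMatrix_apply]
            rw [if_neg (fun h => (hadj.mp h) hadj1)]
          rw [hA1, hA'0, hw2 u h2]
          field_simp
          ring
    · have hadj : Γ'.Adj u v ↔ Γ.Adj u v := by
        rw [hswitch u v, if_neg]
        rintro (⟨_, _, ht⟩ | ⟨hv', _, _⟩)
        · exact htype ht
        · exact hv hv'
      have hbal : ((Γ.neighborFinset v ∩ C₁).card : ℚ)
          = ((Γ.neighborFinset v ∩ C₂).card : ℚ) := by
        rcases hD v hv with h | h | h
        · exact_mod_cast h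
        · exact absurd (Or.inl h) htype
        · exact absurd (Or.inr h) htype
      have hgv : g v = 0 := by rw [hg v, hbal]; ring
      have hAA' : A' u v = A u v := by
        simp only [hA'def, hAdef, adjMatrix_apply, hadj]
      rw [hE u v, hgv, hwv, hAA']
      ring
  have keyDD : ∀ u v, u ∉ C₁ ∪ C₂ → v ∉ C₁ ∪ C₂ → (Q * A * Q) u v = A' u v := by
    intro u v hu hv
    have hadj : Γ'.Adj u v ↔ Γ.Adj u v := by
      rw [hswitch u v, if_neg]
      rintro (⟨hu', _, _⟩ | ⟨hv', _, _⟩)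
      · exact hu hu'
      · exact hv hv'
    have hAA' : A' u v = A u v := by
      simp only [hA'def, hAdef, adjMatrix_apply, hadj]
    rw [hE u v, hw0 u hu, hw0 v hv, hAA']
    ring
  have hsymQAQ : ∀ u v, (Q * A * Q) u v = (Q * A * Q) v u := by
    intro u v
    rw [hE u v, hE v u, hsymA u v]
    ring
  have hsymA' : ∀ u v, A' u v = A' v u := by
    intro u v
    by_cases h : Γ'.Adj u v
    · simp [hA'def, adjMatrix_apply, h, h.symm]
    · have h' : ¬ Γ'.Adj v u := fun hh => h hh.symm
      simp [hA'def, adjMatrix_apply, h, h']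
  have hQAQ : Q * A * Q = A' := by
    ext u v
    by_cases hu : u ∈ C₁ ∪ C₂ <;> by_cases hv : v ∈ C₁ ∪ C₂
    · exact keyCC u v hu hv
    · exact keyCD u v hu hv
    · rw [hsymQAQ u v, hsymA' u v]
      exact keyCD v u hv hu
    · exact keyDD u v hu hv
  have hPP : P * P = P + P := by
    ext u v
    rw [hPM]
    have e : ∑ x, w x * P x v = (2 * c) * (c⁻¹ * w v) := by
      calc ∑ x, w x * P x v = ∑ x, (w x * w x) * (c⁻¹ * w v) := by
            refine Finset.sum_congr rfl fun x _ => ?_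
            simp only [hPdef, Matrix.of_apply]
            ring
        _ = (∑ x, w x * w x) * (c⁻¹ * w v) := by rw [← Finset.sum_mul]
        _ = (2 * c) * (c⁻¹ * w v) := by rw [hwsq]
    have hadd : (P + P) u v = 2 * (c⁻¹ * (w u * w v)) := by
      simp only [Matrix.add_apply, hPdef, Matrix.of_apply]
      ring
    rw [e, hadd]
    calc c⁻¹ * w u * (2 * c * (c⁻¹ * w v))
        = (c * c⁻¹) * (2 * (c⁻¹ * (w u * w v))) := by ring
      _ = 2 * (c⁻¹ * (w u * w v)) := by rw [mul_inv_cancel₀ hc, one_mul]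
  have hQQ : Q * Q = 1 := by
    have e : Q * Q = 1 - P - P + P * P := by rw [hQdef]; noncomm_ring
    rw [e, hPP]
    abel
  set Jm : Matrix V V ℚ := Matrix.of fun _ _ => (1:ℚ) with hJdef
  have hPJ : P * Jm = 0 := by
    ext u v
    rw [hPM]
    simp only [hJdef, Matrix.of_apply, mul_one]
    rw [hwsum, mul_zero, Matrix.zero_apply]
  have hJP : Jm * P = 0 := by
    ext u v
    rw [hMP]
    simp only [hJdef, Matrix.of_apply, one_mul]
    rw [hwsum, mul_zero, zero_mul, Matrix.zero_apply]
  have hQJ : Q * Jm = Jm := by rw [hQdef, Matrix.sub_mul, one_mul, hPJ, sub_zero]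
  have hJQ : Jm * Q = Jm := by rw [hQdef, Matrix.mul_sub, mul_one, hJP, sub_zero]
  have hQC : Q * (Γᶜ.adjMatrix ℚ) * Q = Γ'ᶜ.adjMatrix ℚ := by
    rw [my_compl_adjMatrix Γ, my_compl_adjMatrix Γ', ← hJdef, ← hAdef, ← hA'def]
    have e : Q * (Jm - 1 - A) * Q = Q * Jm * Q - Q * 1 * Q - Q * A * Q := by noncomm_ring
    rw [e, hQJ, hJQ, Matrix.mul_one, hQQ, hQAQ]
  have hME := hsrg.matrix_eq (α := ℚ)
  rw [← hAdef] at hME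
  have hfin : A' * A' = kk • (1 : Matrix V V ℚ) + l • A' + m • (Γ'ᶜ.adjMatrix ℚ) := by
    calc A' * A' = (Q * A * Q) * (Q * A * Q) := by rw [hQAQ]
      _ = Q * A * (Q * Q) * A * Q := by noncomm_ring
      _ = Q * (A ^ 2) * Q := by rw [hQQ]; noncomm_ring
      _ = Q * (kk • (1 : Matrix V V ℚ) + l • A + m • (Γᶜ.adjMatrix ℚ)) * Q := by rw [hME]
      _ = kk • (Q * 1 * Q) + l • (Q * A * Q) + m • (Q * (Γᶜ.adjMatrix ℚ) * Q) := by
          simp only [Matrix.mul_add, Matrix.add_mul, Matrix.mul_smul, Matrix.smul_mul]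
      _ = kk • (1 : Matrix V V ℚ) + l • A' + m • (Γ'ᶜ.adjMatrix ℚ) := by
          rw [Matrix.mul_one, hQQ, hQAQ, hQC]
  rw [hA'def] at hfin
  exact my_isSRGWith_of_matrix Γ' n kk l m hsrg.card hfin
end

section
/- Suppose Γ is a graph on n ≥ 4 vertices whose first four vertices form a set C partitioned as C₁ ∪ C₂ with |C₁| = |C₂| = 2, and the hypotheses of both Godsil–McKay switching (with partition C, D) and WQH switching (with partition C₁, C₂, D) are satisfied, where D is the set of remaining vertices. Then the graph obtained by GM switching and the graph obtained by WQH switching are isomorphic. -/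
/-!
Let `e = (a b)(c d)` on `C₁ = {a, b}`, `C₂ = {c, d}`, fixing `D`, with permutation matrix `P`.
On `C` the WQH switching matrix is `J/2 - P` and the GM one is `J/2 - I = (J/2 - P) P`, so the two
switched graphs differ by relabelling along `e`. Combinatorially:

Inside `C`, regularity of `Γ[C]`, `Γ[C₁]` and `Γ[C₂]` gives every vertex of `C₁` the same number
`r` of neighbours in `C₂` and vice versa. Moving one end of a `C₁C₂` pair by `e` flips its
adjacency iff `r = 1`, so moving both ends preserves it.

For `x ∈ D`, `|N(x) ∩ C₁| = |N(x) ∩ C₂|` unless `N(x) ∩ C` is `C₁` or `C₂`, so this pair of counts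
is one of `(0,0), (1,1), (2,2), (2,0), (0,2)`. The two switchings treat `x` alike except at
`(1,1)`, where GM switches and WQH does not; and exactly there `e` exchanges the neighbours of `x`
in `C` with its non-neighbours.
-/
open SimpleGraph Finset

section DisjointUnion

variable {V : Type*} [DecidableEq V] {s t : Finset V}

theorem card_inter_union_of_disjoint (h : Disjoint s t) (N : Finset V) :
    #(N ∩ (s ∪ t)) = #(N ∩ s) + #(N ∩ t) := by
  rw [inter_union_distrib_left,
    card_union_of_disjoint (h.mono inter_subset_right inter_subset_right)]

theorem inter_union_eq_left_iff_card (h : Disjoint s t) (N : Finset V) :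
    N ∩ (s ∪ t) = s ↔ #s ≤ #(N ∩ s) ∧ #(N ∩ t) = 0 := by
  rw [eq_iff_card_le_of_subset inter_subset_right, inter_eq_right, card_eq_zero,
    ← disjoint_iff_inter_eq_empty]
  rw [Finset.disjoint_left] at h
  simp only [Finset.ext_iff, subset_iff, Finset.disjoint_left, mem_inter, mem_union]
  grind

end DisjointUnion

section Switching

variable {V : Type*} [DecidableEq V]

def switchedAdj (Γ : SimpleGraph V) (C : Finset V) (P : V → Prop) [DecidablePred P]
    (u v : V) : Prop :=
  if (u ∈ C ∧ v ∉ C ∧ P v) ∨ (v ∈ C ∧ u ∉ C ∧ P u) then ¬ Γ.Adj u v else Γ.Adj u v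

namespace switchedAdj

variable {Γ : SimpleGraph V} {C : Finset V} {P : V → Prop} [DecidablePred P] {u v : V}

theorem comm : switchedAdj Γ C P u v ↔ switchedAdj Γ C P v u := by
  simp only [switchedAdj, Γ.adj_comm u v, or_comm]

theorem iff_adj_of_mem_of_mem (hu : u ∈ C) (hv : v ∈ C) :
    switchedAdj Γ C P u v ↔ Γ.Adj u v := by
  simp [switchedAdj, hu, hv]

theorem iff_adj_of_notMem_of_notMem (hu : u ∉ C) (hv : v ∉ C) :
    switchedAdj Γ C P u v ↔ Γ.Adj u v := by
  simp [switchedAdj, hu, hv]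

theorem iff_of_mem_of_notMem (hu : u ∈ C) (hv : v ∉ C) :
    switchedAdj Γ C P u v ↔ (Γ.Adj u v ↔ ¬ P v) := by
  by_cases hP : P v <;> simp [switchedAdj, hu, hv, hP]

end switchedAdj

def switchedAdjIso {Γ G H : SimpleGraph V} {C : Finset V} {P Q : V → Prop} [DecidablePred P]
    [DecidablePred Q] (hG : ∀ u v, G.Adj u v ↔ switchedAdj Γ C P u v)
    (hH : ∀ u v, H.Adj u v ↔ switchedAdj Γ C Q u v) (e : Equiv.Perm V)
    (hmaps : ∀ x ∈ C, e x ∈ C) (hfix : ∀ x ∉ C, e x = x)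
    (hinside : ∀ u ∈ C, ∀ v ∈ C, Γ.Adj (e u) (e v) ↔ Γ.Adj u v)
    (hcross : ∀ u ∈ C, ∀ v ∉ C, (Γ.Adj (e u) v ↔ Γ.Adj u v) ↔ (Q v ↔ P v)) : G ≃g H where
  toEquiv := e
  map_rel_iff' {u v} := by
    have hmixed : ∀ u ∈ C, ∀ v ∉ C, switchedAdj Γ C Q (e u) (e v) ↔ switchedAdj Γ C P u v := by
      intro u hu v hv
      rw [hfix v hv, switchedAdj.iff_of_mem_of_notMem (hmaps u hu) hv,
        switchedAdj.iff_of_mem_of_notMem hu hv]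
      have := hcross u hu v hv
      tauto
    change H.Adj (e u) (e v) ↔ G.Adj u v
    rw [hH, hG]
    by_cases hu : u ∈ C <;> by_cases hv : v ∈ C
    · rw [switchedAdj.iff_adj_of_mem_of_mem (hmaps u hu) (hmaps v hv),
        switchedAdj.iff_adj_of_mem_of_mem hu hv, hinside u hu v hv]
    · exact hmixed u hu v hv
    · rw [switchedAdj.comm, hmixed v hv u hu, switchedAdj.comm]
    · rw [hfix u hu, hfix v hv, switchedAdj.iff_adj_of_notMem_of_notMem hu hv,
        switchedAdj.iff_adj_of_notMem_of_notMem hu hv]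

end Switching

section TwoPairs

variable {V : Type*} [DecidableEq V] {a b c d u v : V}

theorem swap_apply_mem_pair (hu : u ∈ ({a, b} : Finset V)) :
    Equiv.swap a b u ∈ ({a, b} : Finset V) := by
  rw [mem_insert, mem_singleton] at hu
  rcases hu with rfl | rfl <;> simp

theorem swap_apply_of_notMem_pair (hu : u ∉ ({a, b} : Finset V)) : Equiv.swap a b u = u := by
  rw [mem_insert, mem_singleton, not_or] at hu
  exact Equiv.swap_apply_of_ne_of_ne hu.1 hu.2

theorem swap_mem_iff_mem_iff_card_inter_ne_one (hab : a ≠ b) (hu : u ∈ ({a, b} : Finset V))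
    (N : Finset V) :
    (Equiv.swap a b u ∈ N ↔ u ∈ N) ↔ #(N ∩ {a, b}) ≠ 1 := by
  have hcard : #(N ∩ {a, b}) = 1 ↔ (a ∈ N ↔ b ∉ N) := by
    by_cases ha : a ∈ N <;> by_cases hb : b ∈ N <;>
      simp [inter_insert_of_mem, inter_insert_of_notMem, inter_singleton_of_mem,
        inter_singleton_of_notMem, ha, hb, hab]
  rw [mem_insert, mem_singleton] at hu
  rcases hu with rfl | rfl <;> simp only [Equiv.swap_apply_left, Equiv.swap_apply_right] <;> tauto

theorem adj_swap_swap_iff_of_mem_pair {Γ : SimpleGraph V} (hu : u ∈ ({a, b} : Finset V))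
    (hv : v ∈ ({a, b} : Finset V)) :
    Γ.Adj (Equiv.swap a b u) (Equiv.swap a b v) ↔ Γ.Adj u v := by
  simp only [mem_insert, mem_singleton] at hu hv
  rcases hu with rfl | rfl <;> rcases hv with rfl | rfl <;> simp [Γ.adj_comm]

theorem swap_mul_swap_apply_of_notMem (hu : u ∉ ({a, b} : Finset V) ∪ {c, d}) :
    (Equiv.swap a b * Equiv.swap c d) u = u := by
  rw [mem_union, not_or] at hu
  rw [Equiv.Perm.mul_apply, swap_apply_of_notMem_pair hu.2, swap_apply_of_notMem_pair hu.1]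

variable (hdisj : Disjoint ({a, b} : Finset V) {c, d})
include hdisj

theorem swap_mul_swap_apply_of_mem_left (hu : u ∈ ({a, b} : Finset V)) :
    (Equiv.swap a b * Equiv.swap c d) u = Equiv.swap a b u := by
  rw [Equiv.Perm.mul_apply, swap_apply_of_notMem_pair (disjoint_left.mp hdisj hu)]

theorem swap_mul_swap_apply_of_mem_right (hu : u ∈ ({c, d} : Finset V)) :
    (Equiv.swap a b * Equiv.swap c d) u = Equiv.swap c d u := by
  rw [Equiv.Perm.mul_apply,
    swap_apply_of_notMem_pair (disjoint_right.mp hdisj (swap_apply_mem_pair hu))]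

theorem swap_mul_swap_apply_mem (hu : u ∈ ({a, b} : Finset V) ∪ {c, d}) :
    (Equiv.swap a b * Equiv.swap c d) u ∈ ({a, b} : Finset V) ∪ {c, d} := by
  rcases mem_union.mp hu with hu | hu
  · rw [swap_mul_swap_apply_of_mem_left hdisj hu]
    exact mem_union_left _ (swap_apply_mem_pair hu)
  · rw [swap_mul_swap_apply_of_mem_right hdisj hu]
    exact mem_union_right _ (swap_apply_mem_pair hu)

theorem swap_mul_swap_mem_iff_mem_iff (hab : a ≠ b) (hcd : c ≠ d) (N : Finset V)
    (hN : #(N ∩ {a, b}) = #(N ∩ {c, d}) ∨ N ∩ ({a, b} ∪ {c, d}) = {a, b} ∨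
      N ∩ ({a, b} ∪ {c, d}) = {c, d})
    (hu : u ∈ ({a, b} : Finset V) ∪ {c, d}) :
    ((Equiv.swap a b * Equiv.swap c d) u ∈ N ↔ u ∈ N) ↔
      ((N ∩ ({a, b} ∪ {c, d}) = {a, b} ∨ N ∩ ({a, b} ∪ {c, d}) = {c, d}) ↔
        #(N ∩ ({a, b} ∪ {c, d})) = 2) := by
  have hright : N ∩ ({a, b} ∪ {c, d}) = {c, d} ↔ #({c, d} : Finset V) ≤ #(N ∩ {c, d}) ∧
      #(N ∩ {a, b}) = 0 := by
    rw [union_comm]; exact inter_union_eq_left_iff_card hdisj.symm N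
  have hle₁ : #(N ∩ {a, b}) ≤ 2 := (card_le_card inter_subset_right).trans card_le_two
  have hle₂ : #(N ∩ {c, d}) ≤ 2 := (card_le_card inter_subset_right).trans card_le_two
  simp only [inter_union_eq_left_iff_card hdisj, hright, card_inter_union_of_disjoint hdisj,
    card_pair hab, card_pair hcd] at hN ⊢
  rcases mem_union.mp hu with hu | hu
  · rw [swap_mul_swap_apply_of_mem_left hdisj hu,
      swap_mem_iff_mem_iff_card_inter_ne_one hab hu]
    omega
  · rw [swap_mul_swap_apply_of_mem_right hdisj hu,
      swap_mem_iff_mem_iff_card_inter_ne_one hcd hu]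
    omega

end TwoPairs

section Graph

variable {V : Type*} [Fintype V] [DecidableEq V] {Γ : SimpleGraph V} [DecidableRel Γ.Adj]
  {a b c d u v : V}

theorem adj_swap_swap_iff_of_card_inter_eq (hab : a ≠ b) (hcd : c ≠ d) {r : ℕ}
    (h₁ : ∀ x ∈ ({a, b} : Finset V), #(Γ.neighborFinset x ∩ {c, d}) = r)
    (h₂ : ∀ y ∈ ({c, d} : Finset V), #(Γ.neighborFinset y ∩ {a, b}) = r)
    (hu : u ∈ ({a, b} : Finset V)) (hv : v ∈ ({c, d} : Finset V)) :
    Γ.Adj (Equiv.swap a b u) (Equiv.swap c d v) ↔ Γ.Adj u v := by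
  have hswap_u :=
    swap_mem_iff_mem_iff_card_inter_ne_one hab hu (Γ.neighborFinset (Equiv.swap c d v))
  have hswap_v := swap_mem_iff_mem_iff_card_inter_ne_one hcd hv (Γ.neighborFinset u)
  rw [h₂ _ (swap_apply_mem_pair hv)] at hswap_u
  rw [h₁ u hu] at hswap_v
  simp only [mem_neighborFinset, Γ.adj_comm (Equiv.swap c d v)] at hswap_u hswap_v
  tauto

theorem adj_swap_mul_swap_iff (hab : a ≠ b) (hcd : c ≠ d)
    (hdisj : Disjoint ({a, b} : Finset V) {c, d}) {kC k₁ : ℕ}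
    (hregC : ∀ x ∈ ({a, b} : Finset V) ∪ {c, d},
      #(Γ.neighborFinset x ∩ ({a, b} ∪ {c, d})) = kC)
    (hreg₁ : ∀ x ∈ ({a, b} : Finset V), #(Γ.neighborFinset x ∩ {a, b}) = k₁)
    (hreg₂ : ∀ x ∈ ({c, d} : Finset V), #(Γ.neighborFinset x ∩ {c, d}) = k₁)
    (hu : u ∈ ({a, b} : Finset V) ∪ {c, d}) (hv : v ∈ ({a, b} : Finset V) ∪ {c, d}) :
    Γ.Adj ((Equiv.swap a b * Equiv.swap c d) u) ((Equiv.swap a b * Equiv.swap c d) v) ↔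
      Γ.Adj u v := by
  have h₁ : ∀ x ∈ ({a, b} : Finset V), #(Γ.neighborFinset x ∩ {c, d}) = kC - k₁ := by
    intro x hx
    have := hregC x (mem_union_left _ hx)
    rw [card_inter_union_of_disjoint hdisj, hreg₁ x hx] at this
    omega
  have h₂ : ∀ y ∈ ({c, d} : Finset V), #(Γ.neighborFinset y ∩ {a, b}) = kC - k₁ := by
    intro y hy
    have := hregC y (mem_union_right _ hy)
    rw [card_inter_union_of_disjoint hdisj, hreg₂ y hy] at this
    omega
  rcases mem_union.mp hu with hu | hu <;> rcases mem_union.mp hv with hv | hv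
  · rw [swap_mul_swap_apply_of_mem_left hdisj hu, swap_mul_swap_apply_of_mem_left hdisj hv]
    exact adj_swap_swap_iff_of_mem_pair hu hv
  · rw [swap_mul_swap_apply_of_mem_left hdisj hu, swap_mul_swap_apply_of_mem_right hdisj hv]
    exact adj_swap_swap_iff_of_card_inter_eq hab hcd h₁ h₂ hu hv
  · rw [swap_mul_swap_apply_of_mem_right hdisj hu, swap_mul_swap_apply_of_mem_left hdisj hv,
      Γ.adj_comm, Γ.adj_comm u]
    exact adj_swap_swap_iff_of_card_inter_eq hab hcd h₁ h₂ hv hu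
  · rw [swap_mul_swap_apply_of_mem_right hdisj hu, swap_mul_swap_apply_of_mem_right hdisj hv]
    exact adj_swap_swap_iff_of_mem_pair hu hv

end Graph

theorem gm_iso_wqh_general {V : Type*} [Fintype V] [DecidableEq V]
    (Γ Γgm Γwqh : SimpleGraph V)
    [DecidableRel Γ.Adj]
    (C₁ C₂ : Finset V) (hdisj : Disjoint C₁ C₂)
    (hC₁ : C₁.card = 2) (hC₂ : C₂.card = 2)
    -- GM hypotheses for `C = C₁ ∪ C₂`
    (kC : ℕ)
    (hregC : ∀ v ∈ C₁ ∪ C₂, (Γ.neighborFinset v ∩ (C₁ ∪ C₂)).card = kC)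
    -- WQH hypotheses
    (k₁ : ℕ)
    (hreg₁ : ∀ v ∈ C₁, (Γ.neighborFinset v ∩ C₁).card = k₁)
    (hreg₂ : ∀ v ∈ C₂, (Γ.neighborFinset v ∩ C₂).card = k₁)
    (hDwqh : ∀ x ∉ C₁ ∪ C₂,
      (Γ.neighborFinset x ∩ C₁).card = (Γ.neighborFinset x ∩ C₂).card ∨
      Γ.neighborFinset x ∩ (C₁ ∪ C₂) = C₁ ∨
      Γ.neighborFinset x ∩ (C₁ ∪ C₂) = C₂)
    -- `Γgm` is the graph obtained by GM switching
    (hgm : ∀ u v, Γgm.Adj u v ↔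
      (if (u ∈ C₁ ∪ C₂ ∧ v ∉ C₁ ∪ C₂ ∧
            (Γ.neighborFinset v ∩ (C₁ ∪ C₂)).card = 2) ∨
          (v ∈ C₁ ∪ C₂ ∧ u ∉ C₁ ∪ C₂ ∧
            (Γ.neighborFinset u ∩ (C₁ ∪ C₂)).card = 2)
        then ¬ Γ.Adj u v else Γ.Adj u v))
    -- `Γwqh` is the graph obtained by WQH switching
    (hwqh : ∀ u v, Γwqh.Adj u v ↔
      (if (u ∈ C₁ ∪ C₂ ∧ v ∉ C₁ ∪ C₂ ∧
            (Γ.neighborFinset v ∩ (C₁ ∪ C₂) = C₁ ∨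
             Γ.neighborFinset v ∩ (C₁ ∪ C₂) = C₂)) ∨
          (v ∈ C₁ ∪ C₂ ∧ u ∉ C₁ ∪ C₂ ∧
            (Γ.neighborFinset u ∩ (C₁ ∪ C₂) = C₁ ∨
             Γ.neighborFinset u ∩ (C₁ ∪ C₂) = C₂))
        then ¬ Γ.Adj u v else Γ.Adj u v)) :
    Nonempty (Γgm ≃g Γwqh) := by
  obtain ⟨a, b, hab, rfl⟩ := card_eq_two.mp hC₁
  obtain ⟨c, d, hcd, rfl⟩ := card_eq_two.mp hC₂
  refine ⟨switchedAdjIso hgm hwqh (Equiv.swap a b * Equiv.swap c d)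
    (fun _ => swap_mul_swap_apply_mem hdisj) (fun _ => swap_mul_swap_apply_of_notMem)
    (fun _ hu _ hv => adj_swap_mul_swap_iff hab hcd hdisj hregC hreg₁ hreg₂ hu hv)
    (fun u hu v hv => ?_)⟩
  simpa only [mem_neighborFinset, Γ.adj_comm v] using
    swap_mul_swap_mem_iff_mem_iff hdisj hab hcd (Γ.neighborFinset v) (hDwqh v hv) hu

/-- If the hypotheses of both GM switching (with the 4-set `C = C₁ ∪ C₂`) and
WQH switching (with the 2-sets `C₁`, `C₂`) hold, then the two switched graphs
are isomorphic. -/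
theorem gm_iso_wqh {V : Type*} [Fintype V] [DecidableEq V]
    (Γ Γgm Γwqh : SimpleGraph V)
    [DecidableRel Γ.Adj] [DecidableRel Γgm.Adj] [DecidableRel Γwqh.Adj]
    (C₁ C₂ : Finset V) (hdisj : Disjoint C₁ C₂)
    (hC₁ : C₁.card = 2) (hC₂ : C₂.card = 2)
    -- GM hypotheses for `C = C₁ ∪ C₂`
    (kC : ℕ)
    (hregC : ∀ v ∈ C₁ ∪ C₂, (Γ.neighborFinset v ∩ (C₁ ∪ C₂)).card = kC)
    (hDgm : ∀ x ∉ C₁ ∪ C₂, (Γ.neighborFinset x ∩ (C₁ ∪ C₂)).card = 0 ∨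
      (Γ.neighborFinset x ∩ (C₁ ∪ C₂)).card = 2 ∨
      (Γ.neighborFinset x ∩ (C₁ ∪ C₂)).card = 4)
    -- WQH hypotheses
    (k₁ : ℕ)
    (hreg₁ : ∀ v ∈ C₁, (Γ.neighborFinset v ∩ C₁).card = k₁)
    (hreg₂ : ∀ v ∈ C₂, (Γ.neighborFinset v ∩ C₂).card = k₁)
    (hDwqh : ∀ x ∉ C₁ ∪ C₂,
      (Γ.neighborFinset x ∩ C₁).card = (Γ.neighborFinset x ∩ C₂).card ∨
      Γ.neighborFinset x ∩ (C₁ ∪ C₂) = C₁ ∨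
      Γ.neighborFinset x ∩ (C₁ ∪ C₂) = C₂)
    -- `Γgm` is the graph obtained by GM switching
    (hgm : ∀ u v, Γgm.Adj u v ↔
      (if (u ∈ C₁ ∪ C₂ ∧ v ∉ C₁ ∪ C₂ ∧
            (Γ.neighborFinset v ∩ (C₁ ∪ C₂)).card = 2) ∨
          (v ∈ C₁ ∪ C₂ ∧ u ∉ C₁ ∪ C₂ ∧
            (Γ.neighborFinset u ∩ (C₁ ∪ C₂)).card = 2)
        then ¬ Γ.Adj u v else Γ.Adj u v))
    -- `Γwqh` is the graph obtained by WQH switching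
    (hwqh : ∀ u v, Γwqh.Adj u v ↔
      (if (u ∈ C₁ ∪ C₂ ∧ v ∉ C₁ ∪ C₂ ∧
            (Γ.neighborFinset v ∩ (C₁ ∪ C₂) = C₁ ∨
             Γ.neighborFinset v ∩ (C₁ ∪ C₂) = C₂)) ∨
          (v ∈ C₁ ∪ C₂ ∧ u ∉ C₁ ∪ C₂ ∧
            (Γ.neighborFinset u ∩ (C₁ ∪ C₂) = C₁ ∨
             Γ.neighborFinset u ∩ (C₁ ∪ C₂) = C₂))
        then ¬ Γ.Adj u v else Γ.Adj u v)) :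
    Nonempty (Γgm ≃g Γwqh) :=
  gm_iso_wqh_general Γ Γgm Γwqh C₁ C₂ hdisj hC₁ hC₂ kC hregC k₁ hreg₁ hreg₂ hDwqh hgm hwqh
end
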